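/- Let F : ℝ → ℝ be integrable and continuously differentiable, let k(x) = e^(2ix)·( 1 + (1/2)·sech²(x/√2) + i·√2·tanh(x/√2) ), and let G(x) = (1/12)·Im( k(x)·∫_{-∞}^{x} conj(k(y))·F(y) dy + conj(k(x))·∫_{x}^{+∞} k(y)·F(y) dy ). If F is odd, then G is odd; moreover, if in addition F is a Schwartz function, then ∫_ℝ k(x)·F(x) dx = 0 if and only if ∫_ℝ Im(k(x))·F(x) dx = 0. -/

import Mathlib

open MeasureTheory

noncomputable def sech (x : ℝ) : ℝ := 1 / Real.cosh x

noncomputable def kJost (x : ℝ) : ℂ :=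
  Complex.exp (2 * Complex.I * (x : ℂ)) *
    (1 + ((1 / 2 * sech (x / Real.sqrt 2) ^ 2 : ℝ) : ℂ)
      + Complex.I * (Real.sqrt 2 : ℂ) * ((Real.tanh (x / Real.sqrt 2) : ℝ) : ℂ))

/-!
Reflecting `y ↦ -y`, the symmetry `k (-x) = conj (k x)` together with the oddness of `F`
exchanges the two integrals of the variation-of-constants formula and flips their signs, so the
whole complex expression is odd in `x`, hence so is its imaginary part. Likewise `Re k · F` is
odd, so `∫ k F` is purely imaginary and vanishes exactly when its imaginary part does.
-/

open Set Complex ComplexConjugate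

lemma sech_neg (x : ℝ) : sech (-x) = sech x := by
  rw [sech, sech, Real.cosh_neg]

lemma abs_sech_le_one (x : ℝ) : |sech x| ≤ 1 := by
  rw [sech, abs_of_pos (one_div_pos.mpr (Real.cosh_pos x))]
  exact div_le_one_of_le₀ (Real.one_le_cosh x) (Real.cosh_pos x).le

lemma continuous_sech : Continuous sech :=
  continuous_const.div Real.continuous_cosh fun x => (Real.cosh_pos x).ne'

lemma kJost_neg (x : ℝ) : kJost (-x) = conj (kJost x) := by
  simp only [kJost, map_mul, map_add, map_one, map_ofNat, conj_ofReal, conj_I, ← exp_conj,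
    neg_div, sech_neg, Real.tanh_neg, ofReal_neg]
  ring_nf

lemma continuous_kJost : Continuous kJost := by
  have : Continuous Real.tanh := by
    simp only [funext Real.tanh_eq_sinh_div_cosh]
    exact Real.continuous_sinh.div Real.continuous_cosh fun x => (Real.cosh_pos x).ne'
  have := continuous_sech
  unfold kJost
  fun_prop

lemma norm_kJost_le (x : ℝ) : ‖kJost x‖ ≤ 4 := by
  have hexp : ‖exp (2 * I * x)‖ = 1 := by
    rw [← norm_exp_ofReal_mul_I (2 * x)]; push_cast; ring_nf
  have hsech : |1 / 2 * sech (x / √2) ^ 2| ≤ 1 := by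
    have : sech (x / √2) ^ 2 ≤ 1 := by
      rw [← sq_abs]; exact pow_le_one₀ (abs_nonneg _) (abs_sech_le_one _)
    rw [abs_of_nonneg (by positivity)]; linarith
  have htanh := (Real.abs_tanh_lt_one (x / √2)).le
  have hsqrt : |√2| ≤ 2 := by
    rw [abs_of_nonneg (Real.sqrt_nonneg 2), Real.sqrt_le_left zero_le_two]; norm_num
  rw [kJost, norm_mul, hexp, one_mul]
  calc _ ≤ ‖(1 : ℂ)‖ + ‖((1 / 2 * sech (x / √2) ^ 2 : ℝ) : ℂ)‖
          + ‖I * (√2 : ℂ) * ((Real.tanh (x / √2) : ℝ) : ℂ)‖ := norm_add₃_le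
    _ ≤ 1 + 1 + 1 * 2 * 1 := by
        gcongr
        · exact norm_one.le
        · rwa [norm_real, Real.norm_eq_abs]
        · simp only [norm_mul, norm_I, norm_real, Real.norm_eq_abs]
          gcongr
    _ = 4 := by norm_num

lemma integrable_kJost_mul {F : ℝ → ℝ} (hF : Integrable F) :
    Integrable fun x => kJost x * (F x : ℂ) :=
  hF.ofReal.bdd_mul continuous_kJost.aestronglyMeasurable (ae_of_all _ norm_kJost_le)

section Reflection

variable {E : Type*} [NormedAddCommGroup E] [NormedSpace ℝ E]

lemma setIntegral_Iic_neg_eq_neg {g h : ℝ → E} (hgh : ∀ y, g (-y) = -h y) (x : ℝ) :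
    ∫ y in Iic (-x), g y = -∫ y in Ici x, h y := by
  rw [← integral_comp_neg_Ioi, integral_Ici_eq_integral_Ioi, ← integral_neg]
  simp only [hgh]

lemma setIntegral_Ici_neg_eq_neg {g h : ℝ → E} (hgh : ∀ y, g (-y) = -h y) (x : ℝ) :
    ∫ y in Ici (-x), g y = -∫ y in Iic x, h y := by
  rw [integral_Ici_eq_integral_Ioi, ← integral_comp_neg_Iic, ← integral_neg]
  simp only [hgh]

lemma integral_eq_zero_of_odd {f : ℝ → E} (hf : ∀ x, f (-x) = -f x) : ∫ x, f x = 0 := by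
  have h : ∫ x, f x = -∫ x, f x := by
    calc ∫ x, f x = ∫ x, f (-x) := (integral_neg_eq_self f volume).symm
      _ = -∫ x, f x := by simp only [hf, integral_neg]
  have h2 : (2 : ℝ) • ∫ x, f x = 0 := by
    rw [two_smul]; nth_rewrite 1 [h]; exact neg_add_cancel _
  exact (smul_eq_zero.mp h2).resolve_left two_ne_zero

end Reflection

section Symmetric

variable {k : ℝ → ℂ}

noncomputable def greenIntegral (k f : ℝ → ℂ) (x : ℝ) : ℂ :=
  k x * (∫ y in Iic x, conj (k y) * f y) + conj (k x) * ∫ y in Ici x, k y * f y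

theorem greenIntegral_neg {f : ℝ → ℂ} (hk : ∀ x, k (-x) = conj (k x)) (hf : ∀ x, f (-x) = -f x)
    (x : ℝ) : greenIntegral k f (-x) = -greenIntegral k f x := by
  have hIic := setIntegral_Iic_neg_eq_neg (g := fun y => conj (k y) * f y)
    (h := fun y => k y * f y) (fun y => by simp only [hk, hf, conj_conj, mul_neg]) x
  have hIci := setIntegral_Ici_neg_eq_neg (g := fun y => k y * f y)
    (h := fun y => conj (k y) * f y) (fun y => by simp only [hk, hf, mul_neg]) x
  rw [greenIntegral, greenIntegral, hIic, hIci, hk, conj_conj]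
  ring

theorem integral_mul_ofReal_eq_integral_im_mul_I {F : ℝ → ℝ} (hk : ∀ x, k (-x) = conj (k x))
    (hF : ∀ x, F (-x) = -F x) (hkF : Integrable fun x => k x * (F x : ℂ)) :
    ∫ x, k x * (F x : ℂ) = (∫ x, (k x).im * F x : ℝ) * I := by
  apply Complex.ext
  · have hre : ∫ x, (k x).re * F x = 0 :=
      integral_eq_zero_of_odd fun x => by rw [hk, hF, conj_re, mul_neg]
    rw [← RCLike.re_to_complex, ← integral_re hkF]
    simpa [mul_re] using hre
  · rw [← RCLike.im_to_complex, ← integral_im hkF]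
    simp [mul_im]

end Symmetric

theorem odd_source_gives_odd_solution_general
    (F : ℝ → ℝ) (hF : Integrable F)
    (hFodd : ∀ x : ℝ, F (-x) = -F x)
    (G : ℝ → ℝ)
    (hG : ∀ x : ℝ, G x = (1 / 12) *
      (kJost x * (∫ y in Set.Iic x, (starRingEnd ℂ) (kJost y) * (F y : ℂ))
        + (starRingEnd ℂ) (kJost x) * (∫ y in Set.Ici x, kJost y * (F y : ℂ))).im) :
    (∀ x : ℝ, G (-x) = -G x) ∧
    ((∃ S : SchwartzMap ℝ ℝ, ∀ x : ℝ, S x = F x) →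
      ((∫ x : ℝ, kJost x * (F x : ℂ)) = 0 ↔ (∫ x : ℝ, (kJost x).im * F x) = 0)) := by
  have hFodd_ofReal : ∀ x : ℝ, ((F (-x) : ℝ) : ℂ) = -(F x : ℂ) := fun x => by rw [hFodd, ofReal_neg]
  constructor
  · intro x
    rw [hG, hG]
    change (1 / 12) * (greenIntegral kJost (fun y => (F y : ℂ)) (-x)).im
      = -((1 / 12) * (greenIntegral kJost (fun y => (F y : ℂ)) x).im)
    rw [greenIntegral_neg kJost_neg hFodd_ofReal, neg_im, mul_neg]
  · intro _
    rw [integral_mul_ofReal_eq_integral_im_mul_I kJost_neg hFodd (integrable_kJost_mul hF)]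
    simp

theorem odd_source_gives_odd_solution
    (F : ℝ → ℝ) (hF : Integrable F) (hF1 : ContDiff ℝ 1 F)
    (hFodd : ∀ x : ℝ, F (-x) = -F x)
    (G : ℝ → ℝ)
    (hG : ∀ x : ℝ, G x = (1 / 12) *
      (kJost x * (∫ y in Set.Iic x, (starRingEnd ℂ) (kJost y) * (F y : ℂ))
        + (starRingEnd ℂ) (kJost x) * (∫ y in Set.Ici x, kJost y * (F y : ℂ))).im) :
    (∀ x : ℝ, G (-x) = -G x) ∧
    ((∃ S : SchwartzMap ℝ ℝ, ∀ x : ℝ, S x = F x) →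
      ((∫ x : ℝ, kJost x * (F x : ℂ)) = 0 ↔ (∫ x : ℝ, (kJost x).im * F x) = 0)) :=
  odd_source_gives_odd_solution_general F hF hFodd G hG
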